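/- Let 1 < p ≤ 2 and δ ≥ 0. For a symmetric 3×3 real matrix P define F(P) := (δ+|P|)^{(p-2)/2} P. Then there exist constants c, C > 0 depending only on p such that for all symmetric P, Q: c·(δ+|P|+|Q|)^{p-2}·|P−Q|² ≤ |F(P)−F(Q)|² ≤ C·(δ+|P|+|Q|)^{p-2}·|P−Q|². -/
import Mathlib


open scoped BigOperators

/-- Frobenius norm of a 3×3 real matrix. -/
noncomputable def normF (P : Matrix (Fin 3) (Fin 3) ℝ) : ℝ :=
  Real.sqrt (∑ i, ∑ j, (P i j) ^ 2)

/-- `F(P) := (δ+|P|)^{(p-2)/2} P`. -/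
noncomputable def Fmap (p δ : ℝ) (P : Matrix (Fin 3) (Fin 3) ℝ) :
    Matrix (Fin 3) (Fin 3) ℝ :=
  ((δ + normF P) ^ ((p - 2) / 2)) • P

open Real

/-- Key lower estimate: for `g(t) = (δ+t)^s t` with `s ∈ [-1/2, 0]`,
`g(a) - g(b) ≥ (1+s)(δ+a+b)^s (a-b)` for `0 ≤ b ≤ a`. -/
lemma keyA {s δ a b : ℝ} (hs1 : -(1/2) ≤ s) (hs2 : s ≤ 0) (hδ : 0 ≤ δ)
    (hb : 0 ≤ b) (hba : b ≤ a) :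
    (1+s) * ((δ+a+b) ^ s) * (a - b) ≤ (δ+a)^s * a - (δ+b)^s * b := by
  have ha : 0 ≤ a := hb.trans hba
  by_cases h0 : δ + b = 0
  · have hδ0 : δ = 0 := by linarith
    have hb0 : b = 0 := by linarith
    subst hδ0; subst hb0
    simp only [add_zero, zero_add]
    have h1 : 0 ≤ a ^ s := Real.rpow_nonneg ha s
    nlinarith [mul_nonneg h1 ha]
  · have hδb : 0 < δ + b := lt_of_le_of_ne (by linarith) (Ne.symm h0)
    set K := (1+s) * (δ+a+b)^s with hK
    have hmono : MonotoneOn (fun t => (δ+t)^s * t - K * t) (Set.Icc b a) := by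
      apply monotoneOn_of_deriv_nonneg (convex_Icc b a)
      · apply ContinuousOn.sub
        · apply ContinuousOn.mul
          · apply ContinuousOn.rpow_const
            · exact (continuous_const.add continuous_id).continuousOn
            · intro x hx
              exact Or.inl (ne_of_gt (by have := hx.1; linarith))
          · exact continuousOn_id
        · exact (continuous_const.mul continuous_id).continuousOn
      · intro t ht
        rw [interior_Icc] at ht
        have hpos : 0 < δ + t := by have := ht.1; linarith
        have h1 : HasDerivAt (fun t : ℝ => δ + t) 1 t := by
          simpa using (hasDerivAt_id t).const_add δ
        have h2 : HasDerivAt (fun t : ℝ => (δ+t)^s) (1 * s * (δ+t)^(s-1)) t :=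
          h1.rpow_const (Or.inl hpos.ne')
        have h3 : HasDerivAt (fun t : ℝ => (δ+t)^s * t)
            (1 * s * (δ+t)^(s-1) * t + (δ+t)^s * 1) t := h2.mul (hasDerivAt_id t)
        have h4 : HasDerivAt (fun t : ℝ => (δ+t)^s * t - K * t)
            (1 * s * (δ+t)^(s-1) * t + (δ+t)^s * 1 - K * 1) t :=
          h3.sub ((hasDerivAt_id t).const_mul K)
        exact (h4.differentiableAt).differentiableWithinAt
      · intro t ht
        rw [interior_Icc] at ht
        have hpos : 0 < δ + t := by have := ht.1; linarith
        have h1 : HasDerivAt (fun t : ℝ => δ + t) 1 t := by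
          simpa using (hasDerivAt_id t).const_add δ
        have h2 : HasDerivAt (fun t : ℝ => (δ+t)^s) (1 * s * (δ+t)^(s-1)) t :=
          h1.rpow_const (Or.inl hpos.ne')
        have h3 : HasDerivAt (fun t : ℝ => (δ+t)^s * t)
            (1 * s * (δ+t)^(s-1) * t + (δ+t)^s * 1) t := h2.mul (hasDerivAt_id t)
        have h4 : HasDerivAt (fun t : ℝ => (δ+t)^s * t - K * t)
            (1 * s * (δ+t)^(s-1) * t + (δ+t)^s * 1 - K * 1) t :=
          h3.sub ((hasDerivAt_id t).const_mul K)
        rw [h4.deriv]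
        have e1 : (δ+t)^(s-1) * (δ+t) = (δ+t)^s := by
          have h := Real.rpow_add_one hpos.ne' (s-1)
          rw [show s-1+1 = s by ring] at h
          exact h.symm
        have e3 : (δ+a+b)^s ≤ (δ+t)^s :=
          Real.rpow_le_rpow_of_nonpos hpos (by have := ht.2; linarith) hs2
        have hrn : 0 ≤ (δ+t)^(s-1) := Real.rpow_nonneg hpos.le _
        -- s*t*(δ+t)^(s-1) ≥ s*(δ+t)^s
        have e2 : s * (δ+t)^s ≤ s * t * (δ+t)^(s-1) := by
          have : s * t * (δ+t)^(s-1) - s * (δ+t)^s = (-s) * δ * (δ+t)^(s-1) := by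
            rw [← e1]; ring
          nlinarith [mul_nonneg (mul_nonneg (neg_nonneg.2 hs2) hδ) hrn]
        have hK2 : K ≤ (1+s) * (δ+t)^s := by
          rw [hK]
          exact mul_le_mul_of_nonneg_left e3 (by linarith)
        nlinarith [e2, hK2]
    have hfb := hmono (Set.left_mem_Icc.2 hba) (Set.right_mem_Icc.2 hba) hba
    simp only at hfb
    linarith [hfb]

/-- Monotonicity of `g(t) = (δ+t)^s t`. -/
lemma keyMono {s δ x y : ℝ} (hs1 : -(1/2) ≤ s) (hs2 : s ≤ 0) (hδ : 0 ≤ δ)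
    (hx : 0 ≤ x) (hxy : x ≤ y) : (δ+x)^s * x ≤ (δ+y)^s * y := by
  have h := keyA (a := y) (b := x) hs1 hs2 hδ hx hxy
  have h2 : 0 ≤ (1+s) * ((δ+y+x) ^ s) * (y - x) := by
    have := Real.rpow_nonneg (by linarith [hx.trans hxy] : 0 ≤ δ+y+x) s
    have h3 : 0 ≤ 1 + s := by linarith
    exact mul_nonneg (mul_nonneg h3 this) (by linarith)
  linarith

/-- Upper estimate. -/
lemma keyU1 {s δ a b : ℝ} (hs1 : -(1/2) ≤ s) (hs2 : s ≤ 0) (hδ : 0 ≤ δ)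
    (hb : 0 ≤ b) (hba : b ≤ a) :
    (δ+a)^s * a - (δ+b)^s * b ≤ Real.sqrt 2 * ((δ+a+b)^s) * (a-b) := by
  have ha : 0 ≤ a := hb.trans hba
  have hab2 : 0 ≤ a - b := by linarith
  have step1 : (δ+a)^s * a - (δ+b)^s * b ≤ (δ+a)^s * (a-b) := by
    by_cases h0 : δ + b = 0
    · have hb0 : b = 0 := by linarith
      subst hb0; simp
    · have hpos : 0 < δ + b := lt_of_le_of_ne (by linarith) (Ne.symm h0)
      have h1 : (δ+a)^s ≤ (δ+b)^s :=
        Real.rpow_le_rpow_of_nonpos hpos (by linarith) hs2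
      nlinarith [mul_le_mul_of_nonneg_right h1 hb]
  have hs2' : (1:ℝ) ≤ Real.sqrt 2 := by
    rw [show (1:ℝ) = Real.sqrt 1 from (Real.sqrt_one).symm]
    exact Real.sqrt_le_sqrt (by norm_num)
  have step2 : (δ+a)^s ≤ Real.sqrt 2 * (δ+a+b)^s := by
    by_cases h0 : δ + a = 0
    · have ha0 : a = 0 := by linarith
      have hb0 : b = 0 := by linarith
      have hδ0 : δ = 0 := by linarith
      subst ha0; subst hb0; subst hδ0
      simp only [add_zero, zero_add]
      nlinarith [Real.rpow_nonneg (le_refl (0:ℝ)) s, hs2']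
    · have hpa : 0 < δ + a := lt_of_le_of_ne (by linarith) (Ne.symm h0)
      have hab : 0 < δ + a + b := by linarith
      have h1 : (2*(δ+a))^s ≤ (δ+a+b)^s :=
        Real.rpow_le_rpow_of_nonpos hab (by linarith) hs2
      have h2 : (2*(δ+a))^s = 2^s * (δ+a)^s := Real.mul_rpow (by norm_num) hpa.le
      have h3 : (1:ℝ) ≤ Real.sqrt 2 * 2^s := by
        rw [Real.sqrt_eq_rpow, ← Real.rpow_add (by norm_num : (0:ℝ) < 2)]
        calc (1:ℝ) = 2^(0:ℝ) := (Real.rpow_zero 2).symm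
        _ ≤ 2^(1/2 + s) := Real.rpow_le_rpow_of_exponent_le (by norm_num) (by linarith)
      have hnn : 0 ≤ (δ+a)^s := Real.rpow_nonneg hpa.le s
      nlinarith [mul_le_mul_of_nonneg_right h3 hnn,
        mul_le_mul_of_nonneg_left h1 (Real.sqrt_nonneg 2)]
  calc (δ+a)^s * a - (δ+b)^s * b ≤ (δ+a)^s * (a-b) := step1
    _ ≤ Real.sqrt 2 * (δ+a+b)^s * (a-b) :=
        mul_le_mul_of_nonneg_right step2 hab2
-- ordered squared versions
lemma S1o {s δ a b : ℝ} (hs1 : -(1/2) ≤ s) (hs2 : s ≤ 0) (hδ : 0 ≤ δ)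
    (hb : 0 ≤ b) (hba : b ≤ a) :
    1/4 * ((δ+a+b)^s)^2 * (a-b)^2 ≤ ((δ+a)^s * a - (δ+b)^s * b)^2 := by
  have hA := keyA hs1 hs2 hδ hb hba
  have hw : 0 ≤ (δ+a+b)^s := Real.rpow_nonneg (by linarith [hb.trans hba]) s
  have h0 : 0 ≤ 1/2 * ((δ+a+b)^s * (a-b)) :=
    mul_nonneg (by norm_num) (mul_nonneg hw (by linarith))
  have h1 : 1/2 * ((δ+a+b)^s * (a-b)) ≤ (1+s) * ((δ+a+b)^s) * (a-b) := by
    nlinarith [mul_nonneg hw (show 0 ≤ a - b by linarith)]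
  have := pow_le_pow_left₀ h0 (h1.trans hA) 2
  nlinarith [this]

lemma S2o {s δ a b : ℝ} (hs1 : -(1/2) ≤ s) (hs2 : s ≤ 0) (hδ : 0 ≤ δ)
    (hb : 0 ≤ b) (hba : b ≤ a) :
    ((δ+a)^s * a - (δ+b)^s * b)^2 ≤ 2 * ((δ+a+b)^s)^2 * (a-b)^2 := by
  have hU := keyU1 hs1 hs2 hδ hb hba
  have hd0 : 0 ≤ (δ+a)^s * a - (δ+b)^s * b := by
    have := keyMono (x := b) (y := a) hs1 hs2 hδ hb hba
    linarith
  have := pow_le_pow_left₀ hd0 hU 2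
  have hsq : Real.sqrt 2 ^ 2 = 2 := Real.sq_sqrt (by norm_num)
  nlinarith [this, hsq]

lemma S3o {s δ a b : ℝ} (hs1 : -(1/2) ≤ s) (hs2 : s ≤ 0) (hδ : 0 ≤ δ)
    (ha : 0 ≤ a) (hb : 0 ≤ b) :
    ((δ+a)^s * a + (δ+b)^s * b)^2 ≤ 4 * ((δ+a+b)^s)^2 * (a+b)^2 := by
  have h1 : (δ+a)^s * a ≤ (δ+a+b)^s * (a+b) := by
    have := keyMono (x := a) (y := a+b) hs1 hs2 hδ ha (by linarith)
    rw [show δ + (a+b) = δ+a+b by ring] at this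
    exact this
  have h2 : (δ+b)^s * b ≤ (δ+a+b)^s * (a+b) := by
    have := keyMono (x := b) (y := a+b) hs1 hs2 hδ hb (by linarith)
    rw [show δ + (a+b) = δ+a+b by ring] at this
    exact this
  have ha' : 0 ≤ (δ+a)^s * a := mul_nonneg (Real.rpow_nonneg (by linarith) s) ha
  have hb' : 0 ≤ (δ+b)^s * b := mul_nonneg (Real.rpow_nonneg (by linarith) s) hb
  have h0 : 0 ≤ (δ+a)^s * a + (δ+b)^s * b := by linarith
  have hle : (δ+a)^s * a + (δ+b)^s * b ≤ 2 * ((δ+a+b)^s * (a+b)) := by linarith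
  have := pow_le_pow_left₀ h0 hle 2
  nlinarith [this]

/-- Main combined scalar estimate. -/
lemma scalarMain {s δ a b t : ℝ} (hs1 : -(1/2) ≤ s) (hs2 : s ≤ 0) (hδ : 0 ≤ δ)
    (ha : 0 ≤ a) (hb : 0 ≤ b) (ht1 : t ≤ a*b) (ht2 : -(a*b) ≤ t) :
    1/4 * (((δ+a+b)^s)^2 * (a^2+b^2-2*t)) ≤
      ((δ+a)^s)^2 * a^2 + ((δ+b)^s)^2 * b^2 - 2*((δ+a)^s)*((δ+b)^s)*t ∧
    ((δ+a)^s)^2 * a^2 + ((δ+b)^s)^2 * b^2 - 2*((δ+a)^s)*((δ+b)^s)*t ≤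
      4 * (((δ+a+b)^s)^2 * (a^2+b^2-2*t)) := by
  have hS1 : 1/4 * ((δ+a+b)^s)^2 * (a-b)^2 ≤ ((δ+a)^s * a - (δ+b)^s * b)^2 := by
    rcases le_total b a with h | h
    · exact S1o hs1 hs2 hδ hb h
    · have := S1o (a := b) (b := a) hs1 hs2 hδ ha h
      rw [show δ+b+a = δ+a+b by ring] at this
      nlinarith [this]
  have hS2 : ((δ+a)^s * a - (δ+b)^s * b)^2 ≤ 2 * ((δ+a+b)^s)^2 * (a-b)^2 := by
    rcases le_total b a with h | h
    · exact S2o hs1 hs2 hδ hb h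
    · have := S2o (a := b) (b := a) hs1 hs2 hδ ha h
      rw [show δ+b+a = δ+a+b by ring] at this
      nlinarith [this]
  have hS3 := S3o (a := a) (b := b) hs1 hs2 hδ ha hb
  have habt : 0 ≤ a*b - t := by linarith
  have habt' : 0 ≤ a*b + t := by linarith
  have hF4 : ((δ+a+b)^s)^2 * (a*b - t) ≤ ((δ+a)^s)*((δ+b)^s) * (a*b - t) := by
    rcases eq_or_lt_of_le ha with h | hapos
    · have ht0 : t = 0 := by nlinarith
      have : a * b - t = 0 := by rw [ht0, ← h]; ring
      rw [this]; simp
    rcases eq_or_lt_of_le hb with h | hbpos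
    · have ht0 : t = 0 := by nlinarith
      have : a * b - t = 0 := by rw [ht0, ← h]; ring
      rw [this]; simp
    · have hwu : (δ+a+b)^s ≤ (δ+a)^s :=
        Real.rpow_le_rpow_of_nonpos (by linarith) (by linarith) hs2
      have hwv : (δ+a+b)^s ≤ (δ+b)^s :=
        Real.rpow_le_rpow_of_nonpos (by linarith) (by linarith) hs2
      have hw0 : 0 ≤ (δ+a+b)^s := Real.rpow_nonneg (by linarith) s
      have hu0 : 0 ≤ (δ+a)^s := Real.rpow_nonneg (by linarith) s
      have h5 : ((δ+a+b)^s)^2 ≤ ((δ+a)^s)*((δ+b)^s) := by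
        nlinarith [mul_le_mul hwu hwv hw0 hu0]
      exact mul_le_mul_of_nonneg_right h5 habt
  constructor
  · linarith [hS1, hF4, mul_nonneg (sq_nonneg ((δ+a+b)^s)) habt,
      sq_nonneg ((δ+a)^s * a - (δ+b)^s * b)]
  · rcases le_total (((δ+a)^s)*((δ+b)^s)) (4 * ((δ+a+b)^s)^2) with h | h
    · linarith [hS2, mul_le_mul_of_nonneg_right h habt,
        mul_nonneg (sq_nonneg ((δ+a+b)^s)) (sq_nonneg (a-b))]
    · linarith [hS3, mul_le_mul_of_nonneg_right h habt']
lemma sum_smul_sub (u v : ℝ) (P Q : Matrix (Fin 3) (Fin 3) ℝ) :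
    (∑ i, ∑ j, ((u • P - v • Q) i j)^2) =
      u^2 * (∑ i, ∑ j, (P i j)^2) + v^2 * (∑ i, ∑ j, (Q i j)^2)
        - 2*u*v*(∑ i, ∑ j, P i j * Q i j) := by
  simp only [Fin.sum_univ_three, Matrix.sub_apply, Matrix.smul_apply, smul_eq_mul]
  ring

lemma cauchy_schwarz_mat (P Q : Matrix (Fin 3) (Fin 3) ℝ) :
    (∑ i, ∑ j, P i j * Q i j)^2 ≤
      (∑ i, ∑ j, (P i j)^2) * (∑ i, ∑ j, (Q i j)^2) := by
  have := Finset.sum_mul_sq_le_sq_mul_sq Finset.univ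
    (fun x : Fin 3 × Fin 3 => P x.1 x.2) (fun x : Fin 3 × Fin 3 => Q x.1 x.2)
  simpa [Fintype.sum_prod_type] using this

/-- `|F(P)−F(Q)|² ∼ (δ+|P|+|Q|)^{p-2}|P−Q|²` on symmetric matrices, with constants
    depending only on `p`. -/
theorem stmt_5 (p : ℝ) (hp : 1 < p) (hp2 : p ≤ 2) :
    ∃ c C : ℝ, 0 < c ∧ 0 < C ∧
      ∀ δ : ℝ, 0 ≤ δ → ∀ P Q : Matrix (Fin 3) (Fin 3) ℝ, P.IsSymm → Q.IsSymm →
        c * ((δ + normF P + normF Q) ^ (p - 2) * (normF (P - Q)) ^ 2) ≤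
            (normF (Fmap p δ P - Fmap p δ Q)) ^ 2 ∧
        (normF (Fmap p δ P - Fmap p δ Q)) ^ 2 ≤
            C * ((δ + normF P + normF Q) ^ (p - 2) * (normF (P - Q)) ^ 2) := by
  refine ⟨1/4, 4, by norm_num, by norm_num, fun δ hδ P Q _ _ => ?_⟩
  have hs1 : -(1/2) ≤ (p-2)/2 := by linarith
  have hs2 : (p-2)/2 ≤ 0 := by linarith
  have ha : 0 ≤ normF P := Real.sqrt_nonneg _
  have hb : 0 ≤ normF Q := Real.sqrt_nonneg _
  have hNP : (∑ i, ∑ j, (P i j)^2) = (normF P)^2 :=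
    (Real.sq_sqrt (by positivity)).symm
  have hNQ : (∑ i, ∑ j, (Q i j)^2) = (normF Q)^2 :=
    (Real.sq_sqrt (by positivity)).symm
  have hCS := cauchy_schwarz_mat P Q
  rw [hNP, hNQ] at hCS
  set T := ∑ i, ∑ j, P i j * Q i j with hTdef
  have hab : 0 ≤ normF P * normF Q := mul_nonneg ha hb
  have ht1 : T ≤ normF P * normF Q := by nlinarith [hCS, hab]
  have ht2 : -(normF P * normF Q) ≤ T := by nlinarith [hCS, hab]
  have hM : (normF (Fmap p δ P - Fmap p δ Q)) ^ 2 =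
      ((δ + normF P)^((p-2)/2))^2 * (normF P)^2
        + ((δ + normF Q)^((p-2)/2))^2 * (normF Q)^2
        - 2*((δ + normF P)^((p-2)/2))*((δ + normF Q)^((p-2)/2))*T := by
    rw [show normF (Fmap p δ P - Fmap p δ Q) = Real.sqrt (∑ i, ∑ j,
        (((((δ + normF P)^((p-2)/2)) • P - ((δ + normF Q)^((p-2)/2)) • Q :
          Matrix (Fin 3) (Fin 3) ℝ)) i j)^2) from rfl]
    rw [Real.sq_sqrt (by positivity), sum_smul_sub, ← hTdef, hNP, hNQ]
  have hPQ : (normF (P - Q)) ^ 2 = (normF P)^2 + (normF Q)^2 - 2*T := by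
    rw [show normF (P - Q) = Real.sqrt (∑ i, ∑ j, ((P - Q) i j)^2) from rfl,
      Real.sq_sqrt (by positivity)]
    have e : P - Q = (1:ℝ) • P - (1:ℝ) • Q := by simp
    rw [e, sum_smul_sub, ← hTdef, hNP, hNQ]
    ring
  have hw : (δ + normF P + normF Q) ^ (p-2) =
      ((δ + normF P + normF Q) ^ ((p-2)/2))^2 := by
    rw [← Real.rpow_natCast ((δ + normF P + normF Q) ^ ((p-2)/2)) 2,
      ← Real.rpow_mul (by positivity)]
    norm_num
  obtain ⟨h1, h2⟩ := scalarMain hs1 hs2 hδ ha hb ht1 ht2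
  rw [hM, hPQ, hw]
  exact ⟨by linarith [h1], by linarith [h2]⟩
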